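/- Let R be a commutative Noetherian ring, let a be an ideal of R, and let M be an arbitrary R-module. Then the submodule aM is a minimax R-module if and only if the quotient module M/(0 :_M a) is a minimax R-module. -/
import Mathlib


open CategoryTheory

noncomputable section

universe u

/-- An `R`-module `M` is *minimax* if it has a finitely generated submodule `N`
such that `M ⧸ N` is Artinian. -/
def IsMinimax (R : Type u) [CommRing R] (M : Type u) [AddCommGroup M] [Module R M] : Prop :=
  ∃ N : Submodule R M, N.FG ∧ IsArtinian R (M ⧸ N)

/-- The `i`-th local cohomology module `H^i_a(M)` of `M` with support in `a`,
defined as the direct limit of `Ext^i_R(R/a^n, M)`. -/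
def LC {R : Type u} [CommRing R] (a : Ideal R) (i : ℕ)
    (M : Type u) [AddCommGroup M] [Module R M] : ModuleCat.{u} R :=
  (localCohomology a i).obj (ModuleCat.of R M)

/-- `μ_a^b(M) > r` : there is a positive integer `t` with `b^t • H^i_a(M)` minimax
for all `i ≤ r`. -/
def MuGT {R : Type u} [CommRing R] (a b : Ideal R)
    (M : Type u) [AddCommGroup M] [Module R M] (r : ℕ) : Prop :=
  ∃ t : ℕ, 0 < t ∧ ∀ i ≤ r, IsMinimax R ↥((b ^ t) • (⊤ : Submodule R (LC a i M)))

/-- The localized version `μ_{aR_p}^{bR_p}(M_p) > r`. -/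
def MuGTAt {R : Type u} [CommRing R] (a b : Ideal R)
    (M : Type u) [AddCommGroup M] [Module R M] (p : Ideal R) [p.IsPrime] (r : ℕ) : Prop :=
  MuGT (a.map (algebraMap R (Localization.AtPrime p)))
    (b.map (algebraMap R (Localization.AtPrime p)))
    (LocalizedModule p.primeCompl M) r

/-- `f_a^b(M) > r` : for each `i ≤ r` some positive power of `b` annihilates `H^i_a(M)`. -/
def AnnGT {R : Type u} [CommRing R] (a b : Ideal R)
    (M : Type u) [AddCommGroup M] [Module R M] (r : ℕ) : Prop :=
  ∀ i ≤ r, ∃ n : ℕ, 0 < n ∧ (b ^ n) • (⊤ : Submodule R (LC a i M)) = ⊥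

/-- The localized version `f_{aR_p}^{bR_p}(M_p) > r`. -/
def AnnGTAt {R : Type u} [CommRing R] (a b : Ideal R)
    (M : Type u) [AddCommGroup M] [Module R M] (p : Ideal R) [p.IsPrime] (r : ℕ) : Prop :=
  AnnGT (a.map (algebraMap R (Localization.AtPrime p)))
    (b.map (algebraMap R (Localization.AtPrime p)))
    (LocalizedModule p.primeCompl M) r

/-- `M` is `a`-cofinite: `Supp M ⊆ V(a)` and `Ext^j_R(R/a, M)` is finitely generated
for all `j ≥ 0`. -/
def IsCofinite {R : Type u} [CommRing R] (a : Ideal R)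
    (M : Type u) [AddCommGroup M] [Module R M] : Prop :=
  (∀ p ∈ Module.support R M, a ≤ p.asIdeal) ∧
    ∀ j : ℕ, Module.Finite R
      ↥(((Ext R (ModuleCat.{u} R) j).obj (Opposite.op (ModuleCat.of R (R ⧸ a)))).obj
        (ModuleCat.of R M))

/-- An `R`-module `M` is FSF if it has a finitely generated submodule `N` such that
the support of `M ⧸ N` is a finite set. -/
def IsFSF (R : Type u) [CommRing R] (M : Type u) [AddCommGroup M] [Module R M] : Prop :=
  ∃ N : Submodule R M, N.FG ∧ (Module.support R (M ⧸ N)).Finite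

/-- An `R`-module `M` is skinny (weakly Laskerian) if every homomorphic image of `M` has
only finitely many associated primes. -/
def IsSkinny (R : Type u) [CommRing R] (M : Type u) [AddCommGroup M] [Module R M] : Prop :=
  ∀ N : Submodule R M, (associatedPrimes R (M ⧸ N)).Finite

/-- The finiteness dimension `f_a(M) = inf { i : H^i_a(M) is not finitely generated }`. -/
def FinDim {R : Type u} [CommRing R] (a : Ideal R)
    (M : Type u) [AddCommGroup M] [Module R M] : ℕ∞ :=
  sInf ((↑) '' {i : ℕ | ¬ Module.Finite R ↥(LC a i M)})

/-- The `n`-th finiteness dimension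
`f_a^n(M) = inf { f_{aR_p}(M_p) : p ∈ Supp (M/aM), dim R/p ≥ n }`. -/
def FinDimN {R : Type u} [CommRing R] (a : Ideal R)
    (M : Type u) [AddCommGroup M] [Module R M] (n : ℕ) : ℕ∞ :=
  sInf {d : ℕ∞ | ∃ p : PrimeSpectrum R,
    p ∈ Module.support R (M ⧸ (a • ⊤ : Submodule R M)) ∧
    (n : WithBot ℕ∞) ≤ ringKrullDim (R ⧸ p.asIdeal) ∧
    d = FinDim (a.map (algebraMap R (Localization.AtPrime p.asIdeal)))
      (LocalizedModule p.asIdeal.primeCompl M)}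

section Aux

variable {R : Type u} [CommRing R]

theorem isMinimax_of_surjective {M M' : Type u} [AddCommGroup M] [Module R M]
    [AddCommGroup M'] [Module R M'] (f : M →ₗ[R] M') (hf : Function.Surjective f)
    (h : IsMinimax R M) : IsMinimax R M' := by
  obtain ⟨N, hNfg, hNart⟩ := h
  haveI := hNart
  refine ⟨N.map f, hNfg.map f, ?_⟩
  have hle : N ≤ (N.map f).comap f := fun x hx => Submodule.mem_comap.2 (Submodule.mem_map_of_mem hx)
  have hsurj : Function.Surjective (Submodule.mapQ N (N.map f) f hle) := by
    intro y
    obtain ⟨y', rfl⟩ := (N.map f).mkQ_surjective y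
    obtain ⟨x, rfl⟩ := hf y'
    exact ⟨N.mkQ x, by simp [Submodule.mapQ_apply, Submodule.mkQ_apply]⟩
  exact isArtinian_of_surjective _ _ hsurj

theorem isMinimax_submodule [IsNoetherianRing R] {M : Type u} [AddCommGroup M] [Module R M]
    (S : Submodule R M) (h : IsMinimax R M) : IsMinimax R ↥S := by
  obtain ⟨N, hNfg, hNart⟩ := h
  haveI := hNart
  haveI : IsNoetherian R ↥N := isNoetherian_of_fg_of_noetherian N hNfg
  refine ⟨N.comap S.subtype, ?_, ?_⟩
  · have h1 : (S.comap N.subtype).map N.subtype = N ⊓ S := Submodule.map_comap_subtype N S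
    have h2 : (N ⊓ S).FG := h1 ▸ (IsNoetherian.noetherian (S.comap N.subtype)).map N.subtype
    apply Submodule.fg_of_fg_map_injective S.subtype S.injective_subtype
    rw [Submodule.map_comap_subtype]
    rwa [inf_comm] at h2
  · have hker : LinearMap.ker (N.mkQ ∘ₗ S.subtype) = N.comap S.subtype := by
      rw [LinearMap.ker_comp, Submodule.ker_mkQ]
    have := Submodule.ker_liftQ_eq_bot (N.comap S.subtype) (N.mkQ ∘ₗ S.subtype)
      (le_of_eq hker.symm) (le_of_eq hker)
    exact isArtinian_of_injective _ (LinearMap.ker_eq_bot.mp this)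

theorem isMinimax_of_injective {M M' : Type u} [IsNoetherianRing R] [AddCommGroup M] [Module R M]
    [AddCommGroup M'] [Module R M'] (f : M →ₗ[R] M') (hf : Function.Injective f)
    (h : IsMinimax R M') : IsMinimax R M := by
  have : IsMinimax R ↥(LinearMap.range f) := isMinimax_submodule _ h
  exact isMinimax_of_surjective (LinearEquiv.ofInjective f hf).symm.toLinearMap
    (LinearEquiv.ofInjective f hf).symm.surjective this

theorem isMinimax_pi {ι : Type u} [Fintype ι] [DecidableEq ι] {M : ι → Type u}
    [∀ i, AddCommGroup (M i)] [∀ i, Module R (M i)]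
    (h : ∀ i, IsMinimax R (M i)) : IsMinimax R (∀ i, M i) := by
  choose N hNfg hNart using h
  haveI := hNart
  refine ⟨Submodule.pi Set.univ N, Submodule.fg_pi (fun i => hNfg i), ?_⟩
  exact isArtinian_of_linearEquiv (Submodule.quotientPi N).symm

end Aux

theorem smul_minimax_iff_quotient_torsion_minimax
    (R : Type u) [CommRing R] [IsNoetherianRing R] (a : Ideal R)
    (M : Type u) [AddCommGroup M] [Module R M] :
    IsMinimax R ↥(a • (⊤ : Submodule R M)) ↔
      IsMinimax R (M ⧸ Submodule.torsionBySet R M (a : Set R)) := by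
  classical
  obtain ⟨s, hs⟩ : a.FG := IsNoetherian.noetherian a
  set T := Submodule.torsionBySet R M (a : Set R) with hT
  set ι := {r : R // r ∈ s}
  have hmem : ∀ i : ι, (i : R) ∈ a := fun i => hs ▸ Submodule.subset_span i.2
  -- componentwise maps
  set f : ι → (M →ₗ[R] ↥(a • (⊤ : Submodule R M))) := fun i =>
    LinearMap.codRestrict (a • ⊤) ((i : R) • LinearMap.id)
      (fun m => Submodule.smul_mem_smul (hmem i) Submodule.mem_top) with hf
  have hfapp : ∀ (i : ι) (m : M), ((f i m : M)) = (i : R) • m := fun i m => rfl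
  have hTker : ∀ i : ι, T ≤ LinearMap.ker (f i) := by
    intro i m hm
    have := (Submodule.mem_torsionBySet_iff _ _).mp hm ⟨(i : R), hmem i⟩
    exact Subtype.ext this
  constructor
  · -- aM minimax → M/T minimax
    intro h
    set φ : M →ₗ[R] (ι → ↥(a • (⊤ : Submodule R M))) := LinearMap.pi f with hφ
    have hker : T ≤ LinearMap.ker φ := by
      intro m hm
      ext i
      exact congrArg Subtype.val (hTker i hm)
    set ψ : (M ⧸ T) →ₗ[R] (ι → ↥(a • (⊤ : Submodule R M))) := T.liftQ φ hker with hψ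
    have hinj : Function.Injective ψ := by
      rw [← LinearMap.ker_eq_bot]
      apply Submodule.ker_liftQ_eq_bot
      intro m hm
      have hφm : ∀ i : ι, (i : R) • m = 0 := by
        intro i
        exact congrArg Subtype.val (congrFun (LinearMap.mem_ker.mp hm) i)
      rw [hT, Submodule.mem_torsionBySet_iff]
      rintro ⟨r, hr⟩
      show r • m = 0
      have hra : r ∈ Ideal.span (s : Set R) := by rw [hs]; exact hr
      clear hr
      induction hra using Submodule.span_induction with
      | mem x hx => exact hφm ⟨x, hx⟩
      | zero => simp
      | add x y _ _ hx hy => rw [add_smul, hx, hy, add_zero]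
      | smul c x _ hx => rw [smul_assoc, hx, smul_zero]
    exact isMinimax_of_injective ψ hinj (isMinimax_pi (fun _ => h))
  · -- M/T minimax → aM minimax
    intro h
    set g : ι → ((M ⧸ T) →ₗ[R] ↥(a • (⊤ : Submodule R M))) := fun i =>
      T.liftQ (f i) (hTker i) with hg
    set ψ : ((ι → M ⧸ T)) →ₗ[R] ↥(a • (⊤ : Submodule R M)) :=
      ∑ i : ι, (g i).comp (LinearMap.proj i) with hψ
    have hsurj : Function.Surjective ψ := by
      rintro ⟨y, hy⟩
      have key : y ∈ Submodule.map ((a • (⊤ : Submodule R M)).subtype) (LinearMap.range ψ) := by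
        refine Submodule.smul_le.mpr ?_ hy
        intro r hr m _
        have hra : r ∈ Ideal.span (s : Set R) := by rw [hs]; exact hr
        clear hr hy
        induction hra using Submodule.span_induction generalizing m with
        | mem x hx =>
          refine ⟨ψ (Pi.single ⟨x, hx⟩ (T.mkQ m)), ⟨_, rfl⟩, ?_⟩
          have : ψ (Pi.single ⟨x, hx⟩ (T.mkQ m)) = g ⟨x, hx⟩ (T.mkQ m) := by
            rw [hψ, LinearMap.sum_apply]
            rw [Finset.sum_eq_single_of_mem (⟨x, hx⟩ : ι) (Finset.mem_univ _)]
            · simp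
            · intro b _ hb
              simp [Pi.single_eq_of_ne hb]
          rw [this]
          simp [hg, Submodule.liftQ_apply, hfapp]
        | zero => simp
        | add p q hp hq ihp ihq =>
          rw [add_smul]
          exact Submodule.add_mem _ (ihp m trivial) (ihq m trivial)
        | smul c p hp ihp =>
          have : (c • p) • m = p • (c • m) := by
            rw [smul_assoc, smul_comm]
          rw [this]
          exact ihp (c • m) trivial
      obtain ⟨z, hz, hzy⟩ := key
      obtain ⟨w, rfl⟩ := hz
      exact ⟨w, Subtype.ext hzy⟩
    exact isMinimax_of_surjective ψ hsurj (isMinimax_pi (fun _ => h))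

end
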